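/- Let d ≥ 2, n ≥ dR, and let f_1,…,f_R be degree-d forms over 𝔽_q cutting out a smooth complete intersection in ℙ^{n−1}, with char(𝔽_q) > d. For an integer S, let m(S) denote the measure of the set of v ∈ 𝕋^n such that |f_i(v)| < q^{−S} for 1 ≤ i ≤ R. Then m(S) = 1 if S < d, and m(S) = q^{(d−1−S)n}·N(t^{S+1−d}) if S ≥ d, where N(t^j) = #{u ∈ 𝔽_q[τ]^n : |u| < q^j, f_i(u) ≡ 0 mod τ^j for all i}. -/

import Mathlib

open scoped Classical NNReal
open Polynomial MeasureTheory

noncomputable section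

/-! ## The field `K∞ = 𝔽_q((1/t))`, modelled as formal Laurent series in `τ = t⁻¹` -/

/-- `t`, as an element of `K∞ = 𝔽_q((τ))` with `τ = t⁻¹`: the Laurent series `single (-1) 1`. -/
def tK (Fq : Type) [Field Fq] : LaurentSeries Fq := HahnSeries.single (-1 : ℤ) 1

/-- The canonical embedding of the polynomial ring `𝔽_q[t]` into `K∞`. -/
def polyToK (Fq : Type) [Field Fq] (p : Polynomial Fq) : LaurentSeries Fq :=
  Polynomial.eval₂ HahnSeries.C (tK Fq) p

/-- The absolute value `|α| = q^{ord α}` on `K∞` (with `|0| = 0`). -/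
def absK (Fq : Type) [Field Fq] [Fintype Fq] (α : LaurentSeries Fq) : ℝ≥0 :=
  if α = 0 then 0 else (Fintype.card Fq : ℝ≥0) ^ (-(HahnSeries.order α))

/-- Sup-absolute value of a vector. -/
def vabs (Fq : Type) [Field Fq] [Fintype Fq] {R : ℕ} (β : Fin R → LaurentSeries Fq) : ℝ≥0 :=
  Finset.univ.sup fun k => absK Fq (β k)

/-- `‖α‖`: the distance from `α` to the ring of polynomials `𝔽_q[t]`;
this equals `|{α}|` where `{α}` is the fractional part of `α`. -/
def distP (Fq : Type) [Field Fq] [Fintype Fq] (α : LaurentSeries Fq) : ℝ≥0 :=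
  sInf {r : ℝ≥0 | ∃ b : Polynomial Fq, r = absK Fq (α - polyToK Fq b)}

/-- The unit ball `𝕋 = {α ∈ K∞ : |α| < 1}`. -/
def TT (Fq : Type) [Field Fq] [Fintype Fq] : Set (LaurentSeries Fq) := {α | absK Fq α < 1}

/-- The unit polydisc `𝕋^n`. -/
def TTn (Fq : Type) [Field Fq] [Fintype Fq] (n : ℕ) : Set (Fin n → LaurentSeries Fq) :=
  {v | ∀ i, absK Fq (v i) < 1}

/-- The standard additive character `ψ` of `K∞`:
`ψ(α) = exp(2πi·tr(a₋₁)/p)` where `a₋₁` is the coefficient of `t⁻¹` in `α`. -/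
def psiK (Fq : Type) [Field Fq] [Fintype Fq] (p : ℕ) [CharP Fq p] (α : LaurentSeries Fq) : ℂ :=
  letI : Algebra (ZMod p) Fq := (ZMod.castHom dvd_rfl Fq).toAlgebra
  Complex.exp (2 * Real.pi * Complex.I *
    ((Algebra.trace (ZMod p) Fq (α.coeff 1)).val : ℂ) / (p : ℂ))

/-- The polynomial with coefficient vector `v`; as `v` ranges over `Fin P → Fq` this
parametrises exactly the polynomials of norm `< q^P`, i.e. of degree `< P`. -/
def polyOf (Fq : Type) [Field Fq] {P : ℕ} (v : Fin P → Fq) : Polynomial Fq :=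
  ∑ j : Fin P, Polynomial.C (v j) * Polynomial.X ^ (j : ℕ)

/-! ## Zariski-closed sets, irreducibility, dimension and degree -/

/-- A Zariski-closed subset of affine `n`-space. -/
def ZarClosed (F : Type) [Field F] (n : ℕ) (S : Set (Fin n → F)) : Prop :=
  ∃ T : Set (MvPolynomial (Fin n) F), S = {x | ∀ f ∈ T, MvPolynomial.eval x f = 0}

/-- Irreducibility of a set with respect to the Zariski topology. -/
def IrredSet (F : Type) [Field F] (n : ℕ) (S : Set (Fin n → F)) : Prop :=
  S.Nonempty ∧ ∀ C₁ C₂ : Set (Fin n → F), ZarClosed F n C₁ → ZarClosed F n C₂ →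
    S ⊆ C₁ ∪ C₂ → S ⊆ C₁ ∨ S ⊆ C₂

/-- Dimension of a subset of affine space: the length of the longest chain of
irreducible Zariski-closed subsets contained in it. -/
def zdim (F : Type) [Field F] (n : ℕ) (S : Set (Fin n → F)) : ℕ :=
  sSup {m : ℕ | ∃ c : Fin (m + 1) → Set (Fin n → F),
    (∀ i, ZarClosed F n (c i) ∧ IrredSet F n (c i) ∧ c i ⊆ S) ∧ StrictMono c}

/-- Degree of an (irreducible) affine variety `S`: the largest (finite) number of points in
which an affine-linear subspace of complementary dimension can meet `S`. -/
def zdeg (F : Type) [Field F] (n : ℕ) (S : Set (Fin n → F)) : ℕ :=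
  sSup {m : ℕ | ∃ L : AffineSubspace F (Fin n → F),
    Module.finrank F L.direction = n - zdim F n S ∧
    (S ∩ (L : Set (Fin n → F))).Finite ∧ (S ∩ (L : Set (Fin n → F))).ncard = m}

/-! ## Smooth complete intersections and counting functions -/

/-- `f₁, …, f_R` are forms of degree `d` cutting out a smooth complete intersection
of codimension `R` in `ℙ^{n-1}`: they are homogeneous of degree `d`, the affine cone has
dimension `n - R`, and the Jacobian matrix has full rank `R` at every nonzero point of the
cone over the algebraic closure. -/
def SmoothCI (Fq : Type) [Field Fq] {n R : ℕ} (d : ℕ)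
    (f : Fin R → MvPolynomial (Fin n) Fq) : Prop :=
  (∀ k, (f k).IsHomogeneous d) ∧
  zdim (AlgebraicClosure Fq) n
      {x : Fin n → AlgebraicClosure Fq | ∀ k, MvPolynomial.aeval x (f k) = 0} = n - R ∧
  ∀ x : Fin n → AlgebraicClosure Fq, x ≠ 0 → (∀ k, MvPolynomial.aeval x (f k) = 0) →
    Matrix.rank (Matrix.of fun (k : Fin R) (i : Fin n) =>
      MvPolynomial.aeval x (MvPolynomial.pderiv i (f k))) = R

/-- The number of `z ∈ 𝔽_q[t]^n` with `|z| < q^D`, satisfying the side condition `extra`,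
and with `f_k(z) ≡ 0 (mod g)` for all `k`. -/
def NsolP (Fq : Type) [Field Fq] {n R : ℕ} (f : Fin R → MvPolynomial (Fin n) Fq)
    (g : Polynomial Fq) (D : ℕ) (extra : (Fin n → Polynomial Fq) → Prop) : ℕ :=
  Nat.card {z : Fin n → Polynomial Fq //
    (∀ i, (z i).degree < (D : WithBot ℕ)) ∧ extra z ∧
    ∀ k, g ∣ MvPolynomial.aeval z (f k)}

/-! ## Exponential sums -/

/-- The exponential sum `S(α; P) = Σ_{|x| < q^P} ψ(α · f(mx + b))`. -/
def Ssum (Fq : Type) [Field Fq] [Fintype Fq] (p : ℕ) [CharP Fq p] {n R : ℕ}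
    (f : Fin R → MvPolynomial (Fin n) Fq) (m : Polynomial Fq) (b : Fin n → Polynomial Fq)
    (α : Fin R → LaurentSeries Fq) (P : ℕ) : ℂ :=
  ∑ x : Fin n → Fin P → Fq,
    psiK Fq p (∑ k, α k *
      polyToK Fq (MvPolynomial.aeval (fun i => m * polyOf Fq (x i) + b i) (f k)))

/-- The complete exponential sum `S_g(a) = |g|^{-n} Σ_{|y| < |g|} ψ(a · f(my + b) / g)`. -/
def SgSum (Fq : Type) [Field Fq] [Fintype Fq] (p : ℕ) [CharP Fq p] {n R : ℕ}
    (f : Fin R → MvPolynomial (Fin n) Fq) (m : Polynomial Fq) (b : Fin n → Polynomial Fq)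
    (g : Polynomial Fq) (a : Fin R → Polynomial Fq) : ℂ :=
  ((Fintype.card Fq : ℂ) ^ (g.natDegree * n))⁻¹ *
    ∑ y : Fin n → Fin g.natDegree → Fq,
      psiK Fq p (∑ k, polyToK Fq (a k) *
        polyToK Fq (MvPolynomial.aeval (fun i => m * polyOf Fq (y i) + b i) (f k)) /
        polyToK Fq g)

/-! ## Forms given by symmetric coefficients, and their multilinear forms -/

/-- Symmetry of a system of degree-`d` coefficients. -/
def SymCoeffs (Fq : Type) [Field Fq] (d n : ℕ) (c : (Fin d → Fin n) → Fq) : Prop :=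
  ∀ (σ : Equiv.Perm (Fin d)) (s : Fin d → Fin n), c (s ∘ σ) = c s

/-- Evaluation of the degree-`d` form with coefficients `c`:
`f(x) = Σ_{i₁,…,i_d} c_{i₁…i_d} x_{i₁} ⋯ x_{i_d}`. -/
def formEval (Fq : Type) [Field Fq] {A : Type} [CommRing A] (d n : ℕ) (φ : Fq →+* A)
    (c : (Fin d → Fin n) → Fq) (x : Fin n → A) : A :=
  ∑ s : Fin d → Fin n, φ (c s) * ∏ j, x (s j)

/-- The `i`-th multilinear form of the form with symmetric coefficients `c`:
`Ψ_i(x^{(1)},…,x^{(d-1)}) = d! Σ c_{i₁…i_{d-1} i} x^{(1)}_{i₁} ⋯ x^{(d-1)}_{i_{d-1}}`. -/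
def psiML (Fq : Type) [Field Fq] {A : Type} [CommRing A] (d n : ℕ) (φ : Fq →+* A)
    (c : (Fin d → Fin n) → Fq) (i : Fin n) (u : Fin (d - 1) → Fin n → A) : A :=
  (Nat.factorial d : A) * ∑ idx : Fin (d - 1) → Fin n,
    φ (c fun j => if h : (j : ℕ) < d - 1 then idx ⟨(j : ℕ), h⟩ else i) * ∏ j, u j (idx j)

/-- The exponential sum `S(α; P)` for the system of forms with coefficients `c`. -/
def SsumC (Fq : Type) [Field Fq] [Fintype Fq] (p : ℕ) [CharP Fq p] (d n R : ℕ)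
    (c : Fin R → (Fin d → Fin n) → Fq) (m : Polynomial Fq) (b : Fin n → Polynomial Fq)
    (α : Fin R → LaurentSeries Fq) (P : ℕ) : ℂ :=
  ∑ x : Fin n → Fin P → Fq,
    psiK Fq p (∑ k, α k * polyToK Fq
      (formEval Fq d n Polynomial.C (c k) fun i => m * polyOf Fq (x i) + b i))

/-! ## The field `F = algebraic closure of 𝔽_q(t)` and the Birch singular loci -/

/-- An algebraically closed field containing `𝔽_q[t]`. -/
abbrev FF (Fq : Type) [Field Fq] : Type := AlgebraicClosure (FractionRing (Polynomial Fq))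

/-- The embedding `𝔽_q[t] → F`. -/
def embPoly (Fq : Type) [Field Fq] : Polynomial Fq →+* FF Fq :=
  (algebraMap (FractionRing (Polynomial Fq)) (FF Fq)).comp
    (algebraMap (Polynomial Fq) (FractionRing (Polynomial Fq)))

/-- The embedding `𝔽_q → F`. -/
def embFq (Fq : Type) [Field Fq] : Fq →+* FF Fq := (embPoly Fq).comp Polynomial.C

/-- `σ_f`: the maximum over nonzero `h ∈ 𝔽_q[t]^R` of the dimension of the locus
`V_{h·f} = {x : h₁∇f₁(x) + ⋯ + h_R ∇f_R(x) = 0}`. -/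
def sigmaF (Fq : Type) [Field Fq] {n R : ℕ} (f : Fin R → MvPolynomial (Fin n) Fq) : ℕ :=
  sSup {s : ℕ | ∃ h : Fin R → Polynomial Fq, h ≠ 0 ∧
    s = zdim (FF Fq) n {x : Fin n → FF Fq | ∀ i : Fin n,
      ∑ k, embPoly Fq (h k) *
        MvPolynomial.eval₂ (embFq Fq) x (MvPolynomial.pderiv i (f k)) = 0}}

/-!
Write `τ = t⁻¹`, so that `𝕋` is the set of Laurent series in `τ` of order `≥ 1` and
`|α| < q^{-S}` means `ord α ≥ S + 1`. By homogeneity `f_i(v)` has order `≥ d` on `𝕋^n`, which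
settles `S < d`. For `S ≥ d` put `j = S + 1 - d`. Modulo `τ^{d+j}`, `f_i(v)` only depends on `v`
modulo `τ^{j+1}`, that is on the digits `w ∈ (𝔽_q^j)^n` of `v` at `τ, …, τ^j`, and then
`f_i(v) ≡ f_i(τ w(τ)) = τ^d f_i(w)`. So the set in question is the union of the residue boxes
of those `w` with `τ^j ∣ f_i(w)`, and by translation invariance each of the `q^{jn}` boxes
tiling `𝕋^n` has measure `q^{-jn}`.
-/

section Graded

variable {ι K T : Type*} [AddCommMonoid ι] [CommRing K] [SetLike T K] [AddSubgroupClass T K]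
  (A : ι → T) [SetLike.GradedMonoid A]

theorem SetLike.mul_sub_mul_mem_graded {i i' j : ι} {a a' b b' : K} (ha : a ∈ A i)
    (hb' : b' ∈ A i') (haa' : a - a' ∈ A (i + j)) (hbb' : b - b' ∈ A (i' + j)) :
    a * b - a' * b' ∈ A (i + i' + j) := by
  rw [show a * b - a' * b' = a * (b - b') + (a - a') * b' by ring]
  refine add_mem ?_ ?_
  · rw [add_assoc]
    exact SetLike.mul_mem_graded ha hbb'
  · rw [add_right_comm]
    exact SetLike.mul_mem_graded haa' hb'

theorem SetLike.prod_sub_prod_mem_graded {κ : Type*} (w : κ → ι) {j : ι} {a b : κ → K}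
    {s : Finset κ} (ha : ∀ k ∈ s, a k ∈ A (w k)) (hb : ∀ k ∈ s, b k ∈ A (w k))
    (hab : ∀ k ∈ s, a k - b k ∈ A (w k + j)) :
    ∏ k ∈ s, a k - ∏ k ∈ s, b k ∈ A (∑ k ∈ s, w k + j) := by
  classical
  induction s using Finset.induction_on with
  | empty => simp
  | insert k s hk ih =>
    simp only [Finset.prod_insert hk, Finset.sum_insert hk, Finset.forall_mem_insert] at *
    exact SetLike.mul_sub_mul_mem_graded A ha.1 (SetLike.prod_mem_graded A w b hb.2) hab.1
      (ih ha.2 hb.2 hab.2)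

theorem SetLike.pow_sub_pow_mem_graded {i j : ι} {a b : K} (ha : a ∈ A i) (hb : b ∈ A i)
    (hab : a - b ∈ A (i + j)) (m : ℕ) : a ^ m - b ^ m ∈ A (m • i + j) := by
  simpa using SetLike.prod_sub_prod_mem_graded A (s := Finset.range m) (fun _ => i)
    (fun _ _ => ha) (fun _ _ => hb) (fun _ _ => hab)

end Graded

namespace MvPolynomial

variable {R σ : Type*} [CommSemiring R] [Fintype σ] {F : MvPolynomial σ R} {d : ℕ}

theorem IsHomogeneous.sum_eq_of_mem_support (hF : F.IsHomogeneous d) {m : σ →₀ ℕ}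
    (hm : m ∈ F.support) : ∑ i, m i = d := by
  rw [← Finsupp.degree_eq_sum, Finsupp.degree_eq_weight_one]
  exact hF (mem_support_iff.mp hm)

theorem IsHomogeneous.aeval_const_mul {S : Type*} [CommSemiring S] [Algebra R S]
    (hF : F.IsHomogeneous d) (r : S) (z : σ → S) :
    MvPolynomial.aeval (fun i => r * z i) F = r ^ d * MvPolynomial.aeval z F := by
  simp only [aeval_def, eval₂_eq', Finset.mul_sum]
  refine Finset.sum_congr rfl fun m hm => ?_
  rw [← hF.sum_eq_of_mem_support hm, ← Finset.prod_pow_eq_pow_sum]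
  simp only [mul_pow, Finset.prod_mul_distrib]
  ring

variable {K ι T : Type*} [CommRing K] [AddCommMonoid ι] [SetLike T K] [AddSubgroupClass T K]
  (A : ι → T) [SetLike.GradedMonoid A] {φ : R →+* K} {g : ι}

theorem IsHomogeneous.eval₂_mem_graded (hF : F.IsHomogeneous d) (hφ : ∀ r, φ r ∈ A 0)
    {u : σ → K} (hu : ∀ i, u i ∈ A g) : MvPolynomial.eval₂ φ u F ∈ A (d • g) := by
  rw [eval₂_eq']
  refine sum_mem fun m hm => ?_
  have hmon : ∏ i, u i ^ m i ∈ A (∑ i, m i • g) :=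
    SetLike.prod_mem_graded A _ _ fun i _ => SetLike.pow_mem_graded _ (hu i)
  rw [← Finset.sum_smul, hF.sum_eq_of_mem_support hm] at hmon
  simpa using SetLike.mul_mem_graded (hφ _) hmon

theorem IsHomogeneous.eval₂_sub_eval₂_mem_graded (hF : F.IsHomogeneous d) (hφ : ∀ r, φ r ∈ A 0)
    {u v : σ → K} (hu : ∀ i, u i ∈ A g) (hv : ∀ i, v i ∈ A g) {j : ι}
    (huv : ∀ i, u i - v i ∈ A (g + j)) :
    MvPolynomial.eval₂ φ u F - MvPolynomial.eval₂ φ v F ∈ A (d • g + j) := by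
  rw [eval₂_eq', eval₂_eq', ← Finset.sum_sub_distrib]
  refine sum_mem fun m hm => ?_
  have hmon : ∏ i, u i ^ m i - ∏ i, v i ^ m i ∈ A (∑ i, m i • g + j) :=
    SetLike.prod_sub_prod_mem_graded A _ (fun i _ => SetLike.pow_mem_graded _ (hu i))
      (fun i _ => SetLike.pow_mem_graded _ (hv i))
      (fun i _ => SetLike.pow_sub_pow_mem_graded A (hu i) (hv i) (huv i) _)
  rw [← Finset.sum_smul, hF.sum_eq_of_mem_support hm] at hmon
  simpa [← mul_sub] using SetLike.mul_mem_graded (hφ (coeff m F)) hmon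

end MvPolynomial

theorem measure_biUnion_translates {G ι : Type*} [AddCommGroup G] [MeasurableSpace G] [Fintype ι]
    {μ : Measure G} (hinv : ∀ (a : G) (s : Set G), μ ((a + ·) ⁻¹' s) = μ s) {B : Set G}
    {c : ι → G} (hmeas : ∀ i, MeasurableSet ((· - c i) ⁻¹' B))
    (hdisj : Pairwise fun i i' => Disjoint ((· - c i) ⁻¹' B) ((· - c i') ⁻¹' B))
    (hcover : μ (⋃ i, (· - c i) ⁻¹' B) = 1) (W : Finset ι) :
    μ (⋃ i ∈ W, (· - c i) ⁻¹' B) = W.card / Fintype.card ι := by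
  have htrans : ∀ i, μ ((· - c i) ⁻¹' B) = μ B := fun i => by
    rw [← hinv (c i), ← Set.preimage_comp]
    simp [Function.comp_def]
  have hB : μ B = (Fintype.card ι : ENNReal)⁻¹ := by
    rw [measure_iUnion hdisj hmeas, tsum_fintype] at hcover
    simp only [htrans, Finset.sum_const, Finset.card_univ, nsmul_eq_mul] at hcover
    exact ENNReal.eq_inv_of_mul_eq_one_left (by rw [mul_comm, hcover])
  rw [measure_biUnion_finset (hdisj.set_pairwise _) fun i _ => hmeas i]
  simp [htrans, hB, div_eq_mul_inv]

theorem coeff_polyOf {Fq : Type} [Field Fq] {D : ℕ} (w : Fin D → Fq) (k : Fin D) :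
    (polyOf Fq w).coeff k = w k := by
  simp [polyOf, Fin.val_inj]

theorem polyOf_eq_degreeLTEquiv_symm {Fq : Type} [Field Fq] {D : ℕ} (w : Fin D → Fq) :
    polyOf Fq w = (degreeLTEquiv Fq D).symm w := by
  have hmem : polyOf Fq w ∈ degreeLT Fq D := mem_degreeLT.2 (degree_sum_fin_lt w)
  have : (degreeLTEquiv Fq D).symm w = ⟨polyOf Fq w, hmem⟩ :=
    (LinearEquiv.symm_apply_eq _).2 (funext fun k => (coeff_polyOf w k).symm)
  rw [this]

theorem NsolP_true_eq_card {Fq : Type} [Field Fq] [Fintype Fq] {n R : ℕ}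
    (f : Fin R → MvPolynomial (Fin n) Fq) (g : Fq[X]) (D : ℕ) :
    NsolP Fq f g D (fun _ => True) =
      (Finset.univ.filter fun w : Fin n → Fin D → Fq =>
        ∀ k, g ∣ MvPolynomial.aeval (fun i => polyOf Fq (w i)) (f k)).card := by
  have hpoly : ∀ p (hp : p ∈ degreeLT Fq D), polyOf Fq (degreeLTEquiv Fq D ⟨p, hp⟩) = p :=
    fun p hp => by rw [polyOf_eq_degreeLTEquiv_symm, LinearEquiv.symm_apply_apply]
  have hcoeffs : ∀ w (hw : polyOf Fq w ∈ degreeLT Fq D),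
      degreeLTEquiv Fq D ⟨polyOf Fq w, hw⟩ = w := fun w hw => by
    simp_rw [polyOf_eq_degreeLTEquiv_symm, Subtype.coe_eta, LinearEquiv.apply_symm_apply]
  rw [NsolP, ← Fintype.card_subtype, ← Nat.card_eq_fintype_card]
  exact Nat.card_congr
    { toFun z := ⟨fun i => degreeLTEquiv Fq D ⟨z.1 i, mem_degreeLT.2 (z.2.1 i)⟩, by
        simpa only [hpoly] using z.2.2.2⟩
      invFun w := ⟨fun i => polyOf Fq (w.1 i), fun i => degree_sum_fin_lt _, trivial, w.2⟩
      left_inv z := Subtype.ext <| funext fun i => hpoly _ _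
      right_inv w := Subtype.ext <| funext fun i => hcoeffs _ _ }

namespace LaurentSeries

variable (R : Type*) [CommRing R]

/-- In `𝔽_q((1/t))` this is the ball `|α| < q^{1-m}`. -/
def orderGE (m : ℤ) : AddSubgroup (LaurentSeries R) where
  carrier := {α | (m : WithTop ℤ) ≤ α.orderTop}
  zero_mem' := by simp
  add_mem' ha hb := by
    simp only [Set.mem_ofPred_eq] at *
    exact (le_min ha hb).trans HahnSeries.min_orderTop_le_orderTop_add
  neg_mem' := by simp [HahnSeries.orderTop_neg]

variable {R}

theorem mem_orderGE {m : ℤ} {α : LaurentSeries R} :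
    α ∈ orderGE R m ↔ (m : WithTop ℤ) ≤ α.orderTop := by
  rfl

theorem mem_orderGE_iff {m : ℤ} {α : LaurentSeries R} :
    α ∈ orderGE R m ↔ ∀ k < m, α.coeff k = 0 := by
  simp [mem_orderGE, HahnSeries.le_orderTop_iff_forall]

theorem orderGE_antitone : Antitone (orderGE R) := fun _ _ hmm' _ hα =>
  mem_orderGE.2 <| le_trans (WithTop.coe_le_coe.2 hmm') (mem_orderGE.1 hα)

instance : SetLike.GradedMonoid (orderGE R) where
  one_mem := mem_orderGE_iff.2 fun k hk => by simp [HahnSeries.coeff_one, hk.ne]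
  mul_mem _ _ _ _ ha hb := mem_orderGE.2 <|
    le_trans (by exact_mod_cast add_le_add (mem_orderGE.1 ha) (mem_orderGE.1 hb))
      HahnSeries.orderTop_add_le_mul

theorem C_mem_orderGE_zero (r : R) : HahnSeries.C r ∈ orderGE R 0 :=
  mem_orderGE_iff.2 fun k hk => by simp [hk.ne]

theorem coeff_algebraMap_polynomial (p : R[X]) (k : ℕ) :
    (algebraMap R[X] (LaurentSeries R) p).coeff k = p.coeff k := by
  simp [PowerSeries.coeff_coe]

theorem algebraMap_polynomial_mem_orderGE_iff {p : R[X]} {m : ℕ} :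
    algebraMap R[X] (LaurentSeries R) p ∈ orderGE R m ↔ X ^ m ∣ p := by
  rw [mem_orderGE_iff, X_pow_dvd_iff]
  refine ⟨fun h k hk => ?_, fun h k hk => ?_⟩
  · simpa [PowerSeries.coeff_coe] using h k (by exact_mod_cast hk)
  · rw [Polynomial.algebraMap_hahnSeries_apply, PowerSeries.coeff_coe]
    split_ifs with hk0
    · rfl
    · simpa using h _ (by omega)

theorem algebraMap_aeval {n : ℕ} (z : Fin n → R[X]) (F : MvPolynomial (Fin n) R) :
    algebraMap R[X] (LaurentSeries R) (MvPolynomial.aeval z F)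
      = MvPolynomial.eval₂ HahnSeries.C (fun i => algebraMap R[X] _ (z i)) F := by
  rw [MvPolynomial.map_aeval, MvPolynomial.coe_eval₂Hom]
  congr 1
  exact RingHom.ext fun r => by simp

theorem eval₂_mem_orderGE_iff_of_sub_mem [IsDomain R] {n d j : ℕ}
    {F : MvPolynomial (Fin n) R} (hF : F.IsHomogeneous d) {v : Fin n → LaurentSeries R}
    {z : Fin n → R[X]} (hvz : ∀ i, v i - algebraMap R[X] _ (X * z i) ∈ orderGE R (j + 1)) :
    MvPolynomial.eval₂ HahnSeries.C v F ∈ orderGE R (d + j) ↔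
      X ^ j ∣ MvPolynomial.aeval z F := by
  set c := fun i => algebraMap R[X] (LaurentSeries R) (X * z i)
  have hc : ∀ i, c i ∈ orderGE R 1 := fun i => by
    have := (algebraMap_polynomial_mem_orderGE_iff (m := 1)).2 (dvd_mul_right (X ^ 1) (z i))
    rwa [Nat.cast_one, pow_one] at this
  have hv : ∀ i, v i ∈ orderGE R 1 := fun i => by
    have := add_mem (orderGE_antitone (by omega) (hvz i)) (hc i)
    rwa [sub_add_cancel] at this
  have hdiff := hF.eval₂_sub_eval₂_mem_graded (orderGE R) C_mem_orderGE_zero hv hc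
    (j := j) fun i => by rw [add_comm]; exact hvz i
  have hcF : MvPolynomial.eval₂ HahnSeries.C c F
      = algebraMap R[X] _ (X ^ d * MvPolynomial.aeval z F) := by
    rw [← hF.aeval_const_mul, algebraMap_aeval]
  rw [nsmul_one] at hdiff
  rw [← sub_add_cancel (MvPolynomial.eval₂ HahnSeries.C v F)
      (MvPolynomial.eval₂ HahnSeries.C c F), add_mem_cancel_left hdiff, hcF, ← Nat.cast_add,
    algebraMap_polynomial_mem_orderGE_iff, pow_add, mul_dvd_mul_iff_left (pow_ne_zero d X_ne_zero)]

variable {Fq : Type} [Field Fq] {n j : ℕ}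

theorem absK_lt_zpow_iff [Fintype Fq] (α : LaurentSeries Fq) (S : ℤ) :
    absK Fq α < (Fintype.card Fq : ℝ≥0) ^ (-S) ↔ α ∈ orderGE Fq (S + 1) := by
  have hq : (1 : ℝ≥0) < Fintype.card Fq := by exact_mod_cast Fintype.one_lt_card
  rcases eq_or_ne α 0 with rfl | hα
  · simpa [absK] using zpow_pos (one_pos.trans hq) _
  · rw [absK, if_neg hα, zpow_lt_zpow_iff_right₀ hq, mem_orderGE,
      ← HahnSeries.order_eq_orderTop_of_ne_zero hα, WithTop.coe_le_coe]
    omega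

theorem mem_TTn_iff [Fintype Fq] {v : Fin n → LaurentSeries Fq} :
    v ∈ TTn Fq n ↔ ∀ i, v i ∈ orderGE Fq 1 := by
  simpa [TTn] using forall_congr' fun i => absK_lt_zpow_iff (v i) 0

/-- `τ·w(τ)`: the polynomial variable `X` is sent to `τ = t⁻¹`. -/
def boxCentre (w : Fin n → Fin j → Fq) : Fin n → LaurentSeries Fq :=
  fun i => algebraMap Fq[X] _ (X * polyOf Fq (w i))

def box (j : ℕ) (w : Fin n → Fin j → Fq) : Set (Fin n → LaurentSeries Fq) :=
  (· - boxCentre w) ⁻¹' Set.univ.pi fun _ => (orderGE Fq (j + 1) : Set (LaurentSeries Fq))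

def digits (j : ℕ) (v : Fin n → LaurentSeries Fq) : Fin n → Fin j → Fq :=
  fun i k => (v i).coeff (k + 1)

theorem sub_algebraMap_X_mul_polyOf_mem_orderGE_iff (α : LaurentSeries Fq) (w : Fin j → Fq) :
    α - algebraMap Fq[X] _ (X * polyOf Fq w) ∈ orderGE Fq (j + 1) ↔
      α ∈ orderGE Fq 1 ∧ ∀ k : Fin j, α.coeff (k + 1) = w k := by
  set c := algebraMap Fq[X] (LaurentSeries Fq) (X * polyOf Fq w)
  have hc : c ∈ orderGE Fq 1 := by
    have := (algebraMap_polynomial_mem_orderGE_iff (m := 1)).2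
      (dvd_mul_right (X ^ 1) (polyOf Fq w))
    rwa [Nat.cast_one, pow_one] at this
  have hcoeff : ∀ k : Fin j, c.coeff (k + 1) = w k := fun k => by
    have := coeff_algebraMap_polynomial (X * polyOf Fq w) (k + 1)
    rw [Nat.cast_succ] at this
    rw [this, coeff_X_mul, coeff_polyOf]
  constructor
  · intro h
    have hα : α ∈ orderGE Fq 1 := by
      have := add_mem (orderGE_antitone (by omega) h) hc
      rwa [sub_add_cancel] at this
    refine ⟨hα, fun k => ?_⟩
    have := mem_orderGE_iff.1 h (k + 1) (by omega)
    rwa [HahnSeries.coeff_sub, sub_eq_zero, hcoeff] at this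
  · rintro ⟨hα, hw⟩
    refine mem_orderGE_iff.2 fun k hk => ?_
    rw [HahnSeries.coeff_sub, sub_eq_zero]
    rcases lt_or_ge k 1 with hk1 | hk1
    · rw [mem_orderGE_iff.1 hα k hk1, mem_orderGE_iff.1 hc k hk1]
    · obtain ⟨m, rfl⟩ : ∃ m : ℕ, k = m + 1 := ⟨(k - 1).toNat, by omega⟩
      have hm : m < j := by omega
      exact (hw ⟨m, hm⟩).trans (hcoeff ⟨m, hm⟩).symm

theorem mem_box_iff [Fintype Fq] {v : Fin n → LaurentSeries Fq} {w : Fin n → Fin j → Fq} :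
    v ∈ box j w ↔ v ∈ TTn Fq n ∧ digits j v = w := by
  simp only [box, Set.mem_preimage, Set.mem_univ_pi, Pi.sub_apply, boxCentre,
    SetLike.mem_coe, sub_algebraMap_X_mul_polyOf_mem_orderGE_iff, forall_and, mem_TTn_iff,
    digits, funext_iff]

theorem eval₂_mem_orderGE_iff_of_mem_box {d : ℕ} {F : MvPolynomial (Fin n) Fq}
    (hF : F.IsHomogeneous d) {w : Fin n → Fin j → Fq} {v : Fin n → LaurentSeries Fq}
    (hv : v ∈ box j w) :
    MvPolynomial.eval₂ HahnSeries.C v F ∈ orderGE Fq (d + j) ↔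
      X ^ j ∣ MvPolynomial.aeval (fun i => polyOf Fq (w i)) F :=
  eval₂_mem_orderGE_iff_of_sub_mem hF fun i => hv i (Set.mem_univ i)

theorem setOf_eval₂_mem_orderGE_eq_biUnion_box [Fintype Fq] {d R : ℕ}
    {f : Fin R → MvPolynomial (Fin n) Fq} (hf : ∀ k, (f k).IsHomogeneous d) :
    {v | v ∈ TTn Fq n ∧ ∀ k, MvPolynomial.eval₂ HahnSeries.C v (f k) ∈ orderGE Fq (d + j)}
      = ⋃ w ∈ Finset.univ.filter fun w : Fin n → Fin j → Fq =>
          ∀ k, X ^ j ∣ MvPolynomial.aeval (fun i => polyOf Fq (w i)) (f k), box j w := by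
  ext v
  simp only [Set.mem_ofPred_eq, Set.mem_iUnion, Finset.mem_filter, Finset.mem_univ, true_and,
    exists_prop]
  constructor
  · rintro ⟨hv, hfv⟩
    have hvw : v ∈ box j (digits j v) := mem_box_iff.2 ⟨hv, rfl⟩
    exact ⟨digits j v, fun k => (eval₂_mem_orderGE_iff_of_mem_box (hf k) hvw).1 (hfv k), hvw⟩
  · rintro ⟨w, hw, hvw⟩
    exact ⟨(mem_box_iff.1 hvw).1, fun k => (eval₂_mem_orderGE_iff_of_mem_box (hf k) hvw).2 (hw k)⟩

theorem measure_biUnion_box [Fintype Fq] [MeasurableSpace (LaurentSeries Fq)]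
    {μ : Measure (Fin n → LaurentSeries Fq)}
    (hinv : ∀ (a : Fin n → LaurentSeries Fq) (s : Set (Fin n → LaurentSeries Fq)),
      μ ((a + ·) ⁻¹' s) = μ s)
    (hbox : ∀ (c : Fin n → LaurentSeries Fq) (k : ℤ),
      MeasurableSet {v : Fin n → LaurentSeries Fq |
        ∀ i, absK Fq (v i - c i) < (Fintype.card Fq : ℝ≥0) ^ k})
    (hT : μ (TTn Fq n) = 1) (W : Finset (Fin n → Fin j → Fq)) :
    μ (⋃ w ∈ W, box j w) = W.card / (Fintype.card Fq : ENNReal) ^ (j * n) := by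
  have hmeas : ∀ w, MeasurableSet (box j w) := fun w => by
    convert hbox (boxCentre w) (-j) using 1
    ext v
    simp only [box, Set.mem_preimage, Set.mem_univ_pi, Pi.sub_apply, SetLike.mem_coe,
      Set.mem_ofPred_eq, absK_lt_zpow_iff]
  have hdisj : Pairwise fun w w' : Fin n → Fin j → Fq => Disjoint (box j w) (box j w') :=
    fun w w' hne =>
      Set.disjoint_left.2 fun v hv hv' =>
        hne ((mem_box_iff.1 hv).2.symm.trans (mem_box_iff.1 hv').2)
  have hcover : ⋃ w, box j w = TTn Fq n := by
    ext v
    simp [mem_box_iff]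
  refine (measure_biUnion_translates hinv hmeas hdisj (hcover ▸ hT) W).trans ?_
  simp [pow_mul]

end LaurentSeries

open LaurentSeries

theorem statement11_general (Fq : Type) [Field Fq] [Fintype Fq] (d n R : ℕ)
    (f : Fin R → MvPolynomial (Fin n) Fq) (hsm : SmoothCI Fq d f)
    [MeasurableSpace (LaurentSeries Fq)]
    (μ : Measure (Fin n → LaurentSeries Fq))
    (hinv : ∀ (a : Fin n → LaurentSeries Fq) (s : Set (Fin n → LaurentSeries Fq)),
      μ ((a + ·) ⁻¹' s) = μ s)
    (hbox : ∀ (c : Fin n → LaurentSeries Fq) (k : ℤ),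
      MeasurableSet {v : Fin n → LaurentSeries Fq |
        ∀ i, absK Fq (v i - c i) < (Fintype.card Fq : ℝ≥0) ^ k})
    (hT : μ (TTn Fq n) = 1)
    (S : ℤ) :
    (S < d →
      μ {v | v ∈ TTn Fq n ∧ ∀ k, absK Fq (MvPolynomial.eval₂ HahnSeries.C v (f k))
            < (Fintype.card Fq : ℝ≥0) ^ (-S)} = 1) ∧
    ((d : ℤ) ≤ S →
      μ {v | v ∈ TTn Fq n ∧ ∀ k, absK Fq (MvPolynomial.eval₂ HahnSeries.C v (f k))
            < (Fintype.card Fq : ℝ≥0) ^ (-S)}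
        = (Fintype.card Fq : ENNReal) ^ (((d : ℤ) - 1 - S) * n) *
          (NsolP Fq f (Polynomial.X ^ (S + 1 - d).toNat) ((S + 1 - d).toNat)
            (fun _ => True) : ENNReal)) := by
  simp only [absK_lt_zpow_iff]
  constructor
  · intro hS
    convert hT using 2
    refine Set.sep_eq_self_iff_mem_true.2 fun v hv k =>
      orderGE_antitone (show S + 1 ≤ (d : ℤ) by omega) ?_
    simpa using (hsm.1 k).eval₂_mem_graded (orderGE Fq) C_mem_orderGE_zero (mem_TTn_iff.1 hv)
  · intro hS
    obtain ⟨j, hj⟩ : ∃ j : ℕ, (j : ℤ) = S + 1 - d := ⟨_, Int.toNat_of_nonneg (by omega)⟩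
    have hexp : ((d : ℤ) - 1 - S) * n = -((j * n : ℕ) : ℤ) := by
      rw [show S = j + d - 1 by omega]
      push_cast
      ring
    rw [show S + 1 = d + j by omega, setOf_eval₂_mem_orderGE_eq_biUnion_box hsm.1,
      measure_biUnion_box hinv hbox hT, add_sub_cancel_left, Int.toNat_natCast,
      NsolP_true_eq_card, hexp, ENNReal.zpow_neg, zpow_natCast, div_eq_mul_inv, mul_comm]

/-- claim (3.?) in Lemma 3.8: the measure
`m(S) = meas{v ∈ 𝕋^n : |f_i(v)| < q^{-S} ∀i}` equals `1` if `S < d`, and equals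
`q^{(d-1-S)n}·N(t^{S+1-d})` if `S ≥ d`. -/
theorem statement11 (Fq : Type) [Field Fq] [Fintype Fq] (p d n R : ℕ)
    [Fact p.Prime] [CharP Fq p] (hd : 2 ≤ d) (hdp : d < p) (hn : d * R ≤ n)
    (f : Fin R → MvPolynomial (Fin n) Fq) (hsm : SmoothCI Fq d f)
    [MeasurableSpace (LaurentSeries Fq)]
    (μ : Measure (Fin n → LaurentSeries Fq))
    (hinv : ∀ (a : Fin n → LaurentSeries Fq) (s : Set (Fin n → LaurentSeries Fq)),
      μ ((a + ·) ⁻¹' s) = μ s)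
    (hbox : ∀ (c : Fin n → LaurentSeries Fq) (k : ℤ),
      MeasurableSet {v : Fin n → LaurentSeries Fq |
        ∀ i, absK Fq (v i - c i) < (Fintype.card Fq : ℝ≥0) ^ k})
    (hT : μ (TTn Fq n) = 1)
    (S : ℤ) :
    (S < d →
      μ {v | v ∈ TTn Fq n ∧ ∀ k, absK Fq (MvPolynomial.eval₂ HahnSeries.C v (f k))
            < (Fintype.card Fq : ℝ≥0) ^ (-S)} = 1) ∧
    ((d : ℤ) ≤ S →
      μ {v | v ∈ TTn Fq n ∧ ∀ k, absK Fq (MvPolynomial.eval₂ HahnSeries.C v (f k))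
            < (Fintype.card Fq : ℝ≥0) ^ (-S)}
        = (Fintype.card Fq : ENNReal) ^ (((d : ℤ) - 1 - S) * n) *
          (NsolP Fq f (Polynomial.X ^ (S + 1 - d).toNat) ((S + 1 - d).toNat)
            (fun _ => True) : ENNReal)) :=
  statement11_general Fq d n R f hsm μ hinv hbox hT S
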